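/- arXiv:0904.1696 — 3 statements merged into one kernel-verified Lean document; each statement's English description precedes it below -/
import Mathlib

section
/- Let G be a finite k-connected undirected graph with at least k+1 vertices. Then the entanglement of G is at least k and at most the cyclicity of G (the minimum size of a vertex cover of G). -/
open SimpleGraph

/-- Cops have a winning strategy in the entanglement game on `G` with `k` cops,
from the position where Thief stands on `v`, the cops occupy `C`, and it is
Cops' turn. Cops may skip, place a new cop on `v`, or move a placed cop to `v`;
then Thief must move along an edge to a cop-free vertex. Since this predicate is
inductively defined, it holds exactly when Cops can force the play to be finite. -/
inductive CopsWin {V : Type*} [DecidableEq V] (G : SimpleGraph V) (k : ℕ) :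
    V → Finset V → Prop
  | step {v : V} {C C' : Finset V}
      (hmove : C' = C ∨ C' = insert v C ∨ ∃ x ∈ C, C' = insert v (C.erase x))
      (hcard : C'.card ≤ k)
      (hnext : ∀ w, G.Adj v w → w ∉ C' → CopsWin G k w C') :
      CopsWin G k v C

/-- The entanglement of `G`: the least `k` such that `k` cops catch Thief from
any initial vertex chosen by Thief. -/
noncomputable def entanglement {V : Type*} [DecidableEq V] (G : SimpleGraph V) : ℕ :=
  sInf {k | ∀ v : V, CopsWin G k v ∅}

/-- `X` is a vertex cover of `G`. -/
def IsVertexCover {V : Type*} (G : SimpleGraph V) (X : Finset V) : Prop :=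
  ∀ ⦃v w : V⦄, G.Adj v w → v ∈ X ∨ w ∈ X

/-- The cyclicity of an undirected graph: the minimum size of a vertex cover
(equivalently, of a feedback vertex set of the associated symmetric digraph). -/
noncomputable def cyclicity {V : Type*} (G : SimpleGraph V) : ℕ :=
  sInf {n | ∃ X : Finset V, X.card = n ∧ _root_.IsVertexCover G X}

/-- `G` is `m`-connected in the sense of Menger: any two distinct vertices are
joined by `m` pairwise distinct, internally disjoint paths. -/
def MengerConnected {V : Type*} (m : ℕ) (G : SimpleGraph V) : Prop :=
  ∀ u v : V, u ≠ v → ∃ P : Fin m → G.Path u v, Function.Injective P ∧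
    ∀ i j, i ≠ j → ∀ x, x ∈ (P i).1.support → x ∈ (P j).1.support → x = u ∨ x = v

/-!
A vertex cover `X` gives Cops a strategy with `|X|` cops: whenever Thief stands on a vertex of `X`,
put a cop there and never move it again. Thief can spend at most one move outside `X`
(its complement is independent), so every two moves the set of cop-free vertices of `X`
shrinks. Conversely, each of the `k` internally disjoint paths from `v` to another vertex leaves
`v` through a different neighbour, so every vertex has degree at least `k`, and against fewer
than `k` cops Thief always finds a free neighbour.
-/

namespace CopsWin

variable {V : Type*} [DecidableEq V] {G : SimpleGraph V} {k : ℕ} {v : V} {C : Finset V}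

theorem of_skip (hC : C.card ≤ k) (h : ∀ w, G.Adj v w → w ∉ C → CopsWin G k w C) :
    CopsWin G k v C :=
  .step (Or.inl rfl) hC h

theorem of_place (hC : (insert v C).card ≤ k)
    (h : ∀ w, G.Adj v w → w ∉ insert v C → CopsWin G k w (insert v C)) : CopsWin G k v C :=
  .step (Or.inr (Or.inl rfl)) hC h

theorem not_of_lt_minDegree [Fintype V] [DecidableRel G.Adj] (hk : k < G.minDegree) :
    ¬ CopsWin G k v C := by
  intro h
  induction h with
  | @step v C C' _ hcard _ ih =>
    obtain ⟨w, hw⟩ : (G.neighborFinset v \ C').Nonempty := by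
      rw [← Finset.card_pos]
      have := G.minDegree_le_degree v
      have := Finset.le_card_sdiff C' (G.neighborFinset v)
      rw [card_neighborFinset_eq_degree] at this
      omega
    rw [Finset.mem_sdiff, mem_neighborFinset] at hw
    exact ih w hw.1 hw.2

end CopsWin

namespace IsVertexCover

variable {V : Type*} {G : SimpleGraph V} {X : Finset V}

theorem univ [Fintype V] : _root_.IsVertexCover G Finset.univ :=
  fun v _ _ => Or.inl (Finset.mem_univ v)

theorem copsWin [DecidableEq V] (hX : _root_.IsVertexCover G X) {C : Finset V} (hCX : C ⊆ X)
    {v : V} (hv : v ∉ C) : CopsWin G X.card v C := by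
  induction hn : (X \ C).card using Nat.strong_induction_on generalizing C v with
  | _ n ih =>
  have in_cover : ∀ u ∈ X, u ∉ C → CopsWin G X.card u C := fun u hu huC =>
    have hsub : insert u C ⊆ X := Finset.insert_subset hu hCX
    .of_place (Finset.card_le_card hsub) fun _ _ hw => by
      refine ih _ ?_ hsub hw rfl
      rw [← hn, Finset.sdiff_insert]
      exact Finset.card_erase_lt_of_mem (Finset.mem_sdiff.2 ⟨hu, huC⟩)
  by_cases hvX : v ∈ X
  · exact in_cover v hvX hv
  · exact .of_skip (Finset.card_le_card hCX) fun w hvw hw =>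
      in_cover w ((hX hvw).resolve_left hvX) hw

theorem entanglement_le_card [DecidableEq V] (hX : _root_.IsVertexCover G X) :
    entanglement G ≤ X.card :=
  Nat.sInf_le fun _ => hX.copsWin (Finset.empty_subset X) (Finset.notMem_empty _)

end IsVertexCover

section Entanglement

variable {V : Type*} [Fintype V] [DecidableEq V] (G : SimpleGraph V)

theorem copsWin_entanglement (v : V) : CopsWin G (entanglement G) v ∅ :=
  Nat.sInf_mem (s := {k | ∀ v : V, CopsWin G k v ∅})
    ⟨_, fun _ => IsVertexCover.univ.copsWin (Finset.empty_subset _) (Finset.notMem_empty _)⟩ v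

theorem minDegree_le_entanglement [DecidableRel G.Adj] : G.minDegree ≤ entanglement G := by
  by_contra! hlt
  obtain ⟨v⟩ : Nonempty V := by
    by_contra! hV
    simp at hlt
  exact CopsWin.not_of_lt_minDegree hlt (copsWin_entanglement G v)

theorem entanglement_le_cyclicity : entanglement G ≤ cyclicity G := by
  obtain ⟨X, hXcard, hX⟩ :
      cyclicity G ∈ {n | ∃ X : Finset V, X.card = n ∧ _root_.IsVertexCover G X} :=
    Nat.sInf_mem ⟨_, Finset.univ, rfl, IsVertexCover.univ⟩
  exact hXcard ▸ hX.entanglement_le_card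

end Entanglement

theorem SimpleGraph.Walk.IsPath.eq_of_snd_eq_end {V : Type*} {G : SimpleGraph V} {u v : V}
    {p q : G.Walk u v} (hp : p.IsPath) (hq : q.IsPath) (hpnil : ¬ p.Nil) (hqnil : ¬ q.Nil)
    (hpv : p.snd = v) (hqv : q.snd = v) : p = q := by
  have hpe : s(u, v) ∈ p.edges := by simpa [hpv] using p.mk_start_snd_mem_edges hpnil
  have hqe : s(u, v) ∈ q.edges := by simpa [hqv] using q.mk_start_snd_mem_edges hqnil
  rw [hp.eq_adj_toWalk_of_mem_edges hpe, hq.eq_adj_toWalk_of_mem_edges hqe]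

namespace MengerConnected

variable {V : Type*} {G : SimpleGraph V} {k : ℕ}

theorem le_degree (hconn : MengerConnected k G) {u v : V} (huv : u ≠ v)
    [Fintype (G.neighborSet u)] : k ≤ G.degree u := by
  obtain ⟨P, hPinj, hdisj⟩ := hconn u v huv
  have hnil (i : Fin k) : ¬ (P i).1.Nil := Walk.not_nil_of_ne huv
  have hsnd_inj : Function.Injective fun i => (P i).1.snd := by
    intro i j (hij : (P i).1.snd = (P j).1.snd)
    by_contra hne
    have hmem : (P i).1.snd ∈ (P j).1.support := hij ▸ (P j).1.getVert_mem_support 1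
    have hi : (P i).1.snd = v :=
      (hdisj i j hne _ ((P i).1.getVert_mem_support 1) hmem).resolve_left
        ((P i).1.adj_snd (hnil i)).ne'
    exact hne (hPinj (Subtype.ext ((P i).2.eq_of_snd_eq_end (P j).2 (hnil i) (hnil j) hi
      (hij ▸ hi))))
  calc k = Fintype.card (Fin k) := (Fintype.card_fin k).symm
    _ ≤ Fintype.card (G.neighborSet u) :=
      Fintype.card_le_of_injective (fun i => ⟨(P i).1.snd, (P i).1.adj_snd (hnil i)⟩)
        fun i j hij => hsnd_inj (congrArg Subtype.val hij)
    _ = G.degree u := G.card_neighborSet_eq_degree u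

theorem le_minDegree [Fintype V] [DecidableRel G.Adj] (hconn : MengerConnected k G)
    (hcard : k + 1 ≤ Fintype.card V) : k ≤ G.minDegree := by
  rcases Nat.eq_zero_or_pos k with rfl | hk
  · exact Nat.zero_le _
  have : Nonempty V := Fintype.card_pos_iff.1 (by omega)
  refine G.le_minDegree_of_forall_le_degree k fun u => ?_
  obtain ⟨v, hvu⟩ := Fintype.exists_ne_of_one_lt_card (by omega) u
  exact hconn.le_degree hvu.symm

end MengerConnected

/-- if `G` is a `k`-connected graph with at least `k+1` vertices, then
`k ≤ Ent(G) ≤ Cycl(G)`. -/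
theorem entanglement_between_connectivity_and_cyclicity
    {V : Type*} [Fintype V] [DecidableEq V] (k : ℕ) (G : SimpleGraph V)
    (hconn : MengerConnected k G) (hcard : k + 1 ≤ Fintype.card V) :
    k ≤ entanglement G ∧ entanglement G ≤ cyclicity G := by
  classical
  exact ⟨(hconn.le_minDegree hcard).trans (minDegree_le_entanglement G),
    entanglement_le_cyclicity G⟩
end

section
/- Let B be a finite k'-connected graph and let G be obtained from B by adding h new vertices v₁,…,v_h, each joined by an edge to every vertex of B (and no edges among the new vertices). Then G is min(|V(B)|, k'+h)-connected. -/
open SimpleGraph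

/-- The graph obtained from `B` by adding `h` new vertices, each joined by an edge
to every vertex of `B`, with no edges among the new vertices. -/
def joinGraph {β : Type*} (B : SimpleGraph β) (h : ℕ) : SimpleGraph (β ⊕ Fin h) where
  Adj x y :=
    match x, y with
    | Sum.inl a, Sum.inl b => B.Adj a b
    | Sum.inl _, Sum.inr _ => True
    | Sum.inr _, Sum.inl _ => True
    | Sum.inr _, Sum.inr _ => False
  symm := ⟨by rintro (a | a) (b | b) hab <;> first | exact hab.symm | trivial⟩
  loopless := ⟨by rintro (a | a) hab <;> first | exact B.loopless.irrefl a hab | exact hab⟩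

/-! Paths of length two through the new vertices are internally disjoint from one another and from
the paths inside `B`; this gives `k' + h` paths between two old vertices and `|V(B)|` paths between
two new ones. Between an old vertex `a` and a new vertex `v`, take the edge `av`, the paths `acv`
through the neighbours `c` of `a` (there are at least `k'` of them as soon as `B` has a second
vertex), and detours `awdv` pairing the other new vertices `w` with non-neighbours `d ≠ a` of `a`:
that is `1 + deg a + min (|V(B)| - 1 - deg a, h - 1) = min (|V(B)|, deg a + h)` paths. -/

open Function

theorem Pairwise.sum_elim {α ι κ : Type*} {r : α → α → Prop} (hr : ∀ a b, r a b → r b a)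
    {f : ι → α} {g : κ → α} (hf : Pairwise (r on f)) (hg : Pairwise (r on g))
    (hfg : ∀ i j, r (f i) (g j)) : Pairwise (r on Sum.elim f g) := by
  rintro (i | i) (j | j) hij
  · exact hf fun h => hij (congrArg _ h)
  · exact hfg i j
  · exact hr _ _ (hfg j i)
  · exact hg fun h => hij (congrArg _ h)

namespace SimpleGraph

variable {V W : Type*} {G : SimpleGraph V} {u v x y : V}

def Walk.internalVertices (p : G.Walk u v) : Set V := {x | x ∈ p.support ∧ x ≠ u ∧ x ≠ v}

theorem Walk.internalVertices_reverse (p : G.Walk u v) :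
    p.reverse.internalVertices = p.internalVertices := by
  ext x
  simp only [internalVertices, support_reverse, List.mem_reverse, Set.mem_ofPred_eq, and_comm]

theorem Walk.internalVertices_map {G' : SimpleGraph W} {f : G →g G'} (hf : Injective f)
    (p : G.Walk u v) : (p.map f).internalVertices = f '' p.internalVertices := by
  ext y
  simp only [internalVertices, support_map, List.mem_map, Set.mem_ofPred_eq, Set.mem_image]
  constructor
  · rintro ⟨⟨x, hx, rfl⟩, hu, hv⟩
    exact ⟨x, ⟨hx, fun h => hu (h ▸ rfl), fun h => hv (h ▸ rfl)⟩, rfl⟩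
  · rintro ⟨x, ⟨hx, hu, hv⟩, rfl⟩
    exact ⟨⟨x, hx, rfl⟩, hf.ne hu, hf.ne hv⟩

theorem Walk.snd_mem_internalVertices {p : G.Walk u v} (huv : u ≠ v) (hv : p.snd ≠ v) :
    p.snd ∈ p.internalVertices :=
  ⟨p.getVert_mem_support 1, (p.adj_snd (not_nil_of_ne huv)).ne', hv⟩

theorem Walk.disjoint_internalVertices_iff {p q : G.Walk u v} :
    Disjoint p.internalVertices q.internalVertices ↔
      ∀ x, x ∈ p.support → x ∈ q.support → x = u ∨ x = v := by
  simp only [Set.disjoint_left, internalVertices, Set.mem_ofPred_eq, not_and]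
  exact forall_congr' fun x => by tauto

namespace Path

def ofAdj₂ (h₁ : G.Adj u x) (h₂ : G.Adj x v) (huv : u ≠ v) : G.Path u v :=
  ⟨.cons h₁ (.cons h₂ .nil), by simp [h₁.ne, h₂.ne, huv]⟩

def ofAdj₃ (h₁ : G.Adj u x) (h₂ : G.Adj x y) (h₃ : G.Adj y v) (huy : u ≠ y) (hxv : x ≠ v)
    (huv : u ≠ v) : G.Path u v :=
  ⟨.cons h₁ (.cons h₂ (.cons h₃ .nil)), by simp [h₁.ne, h₂.ne, h₃.ne, huy, hxv, huv]⟩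

theorem internalVertices_singleton (h : G.Adj u v) :
    (singleton h : G.Walk u v).internalVertices = ∅ := by
  ext x
  simp only [Walk.internalVertices, singleton_coe, Walk.support_cons, Walk.support_nil,
    List.mem_cons, List.not_mem_nil, Set.mem_ofPred_eq, Set.mem_empty_iff_false]
  tauto

theorem internalVertices_ofAdj₂ (h₁ : G.Adj u x) (h₂ : G.Adj x v) (huv : u ≠ v) :
    (ofAdj₂ h₁ h₂ huv : G.Walk u v).internalVertices = {x} := by
  ext z
  have := h₁.ne'
  have := h₂.ne
  simp only [Walk.internalVertices, ofAdj₂, Walk.support_cons, Walk.support_nil,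
    List.mem_cons, List.not_mem_nil, Set.mem_ofPred_eq, Set.mem_singleton_iff]
  grind

theorem internalVertices_ofAdj₃ (h₁ : G.Adj u x) (h₂ : G.Adj x y) (h₃ : G.Adj y v)
    (huy : u ≠ y) (hxv : x ≠ v) (huv : u ≠ v) :
    (ofAdj₃ h₁ h₂ h₃ huy hxv huv : G.Walk u v).internalVertices = {x, y} := by
  ext z
  have := h₁.ne'
  have := h₃.ne
  simp only [Walk.internalVertices, ofAdj₃, Walk.support_cons, Walk.support_nil,
    List.mem_cons, List.not_mem_nil, Set.mem_ofPred_eq, Set.mem_insert_iff,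
    Set.mem_singleton_iff]
  grind

def Independent (p q : G.Path u v) : Prop :=
  p ≠ q ∧ Disjoint (p : G.Walk u v).internalVertices (q : G.Walk u v).internalVertices

theorem Independent.symm {p q : G.Path u v} (h : Independent p q) : Independent q p :=
  ⟨h.1.symm, h.2.symm⟩

theorem independent_of_disjoint {p q : G.Path u v}
    (hp : (p : G.Walk u v).internalVertices.Nonempty)
    (hpq : Disjoint (p : G.Walk u v).internalVertices (q : G.Walk u v).internalVertices) :
    Independent p q := by
  refine ⟨?_, hpq⟩
  rintro rfl
  exact hp.ne_empty (disjoint_self.1 hpq)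

theorem pairwise_independent_of_disjoint {ι : Type*} {P : ι → G.Path u v}
    (hne : ∀ i, (P i : G.Walk u v).internalVertices.Nonempty)
    (hP : Pairwise (Disjoint on fun i => (P i : G.Walk u v).internalVertices)) :
    Pairwise (Independent on P) :=
  fun i _ hij => independent_of_disjoint (hne i) (hP hij)

theorem Independent.reverse {p q : G.Path u v} (h : Independent p q) :
    Independent p.reverse q.reverse := by
  refine ⟨fun e => h.1 ?_, ?_⟩
  · exact Subtype.ext (Walk.reverse_injective (congrArg Subtype.val e))
  · simpa only [reverse_coe, Walk.internalVertices_reverse] using h.2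

theorem Independent.map {G' : SimpleGraph W} {f : G →g G'} (hf : Injective f)
    {p q : G.Path u v} (h : Independent p q) : Independent (p.map f hf) (q.map f hf) := by
  refine ⟨fun e => h.1 (map_injective hf u v e), ?_⟩
  simpa only [map_coe, Walk.internalVertices_map hf, Set.disjoint_image_iff hf] using h.2

theorem Independent.snd_ne {p q : G.Path u v} (h : Independent p q) (huv : u ≠ v) :
    (p : G.Walk u v).snd ≠ (q : G.Walk u v).snd := by
  intro e
  by_cases hv : (p : G.Walk u v).snd = v
  · have hp := Walk.mk_start_snd_mem_edges (p := (p : G.Walk u v)) (Walk.not_nil_of_ne huv)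
    have hq := Walk.mk_start_snd_mem_edges (p := (q : G.Walk u v)) (Walk.not_nil_of_ne huv)
    rw [hv] at hp
    rw [← e, hv] at hq
    exact h.1 (Subtype.ext ((p.2.eq_adj_toWalk_of_mem_edges hp).trans
      (q.2.eq_adj_toWalk_of_mem_edges hq).symm))
  · exact Set.disjoint_left.1 h.2 (Walk.snd_mem_internalVertices huv hv)
      (e ▸ Walk.snd_mem_internalVertices huv (e ▸ hv))

end Path

theorem Path.pairwise_independent_iff {ι : Type*} {P : ι → G.Path u v} :
    Pairwise (Path.Independent on P) ↔ Injective P ∧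
      ∀ i j, i ≠ j → ∀ x, x ∈ (P i : G.Walk u v).support → x ∈ (P j : G.Walk u v).support →
        x = u ∨ x = v := by
  simp only [injective_iff_pairwise_ne, ← Walk.disjoint_internalVertices_iff]
  exact ⟨fun h => ⟨fun i j hij => (h hij).1, fun i j hij => (h hij).2⟩,
    fun h i j hij => ⟨h.1 hij, h.2 i j hij⟩⟩

variable (G) in
def HasIndependentPaths (m : ℕ) (u v : V) : Prop :=
  ∃ P : Fin m → G.Path u v, Pairwise (Path.Independent on P)

theorem hasIndependentPaths_of_pairwise {ι : Type*} [Fintype ι] {P : ι → G.Path u v}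
    (hP : Pairwise (Path.Independent on P)) : G.HasIndependentPaths (Fintype.card ι) u v :=
  ⟨P ∘ (Fintype.equivFin ι).symm, hP.comp_of_injective (Fintype.equivFin ι).symm.injective⟩

theorem HasIndependentPaths.mono {m n : ℕ} (h : G.HasIndependentPaths n u v) (hmn : m ≤ n) :
    G.HasIndependentPaths m u v :=
  let ⟨P, hP⟩ := h
  ⟨P ∘ Fin.castLE hmn, hP.comp_of_injective (Fin.castLE_injective hmn)⟩

theorem HasIndependentPaths.symm {m : ℕ} (h : G.HasIndependentPaths m u v) :
    G.HasIndependentPaths m v u :=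
  let ⟨P, hP⟩ := h
  ⟨fun i => (P i).reverse, fun _ _ hij => (hP hij).reverse⟩

end SimpleGraph

theorem mengerConnected_iff_hasIndependentPaths {V : Type*} {m : ℕ} {G : SimpleGraph V} :
    MengerConnected m G ↔ ∀ u v, u ≠ v → G.HasIndependentPaths m u v := by
  simp only [MengerConnected, HasIndependentPaths, Path.pairwise_independent_iff]

theorem MengerConnected.le_degree_s5 {V : Type*} {k : ℕ} {G : SimpleGraph V} {a b : V}
    [Fintype (G.neighborSet a)] (hG : MengerConnected k G) (hab : a ≠ b) : k ≤ G.degree a := by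
  obtain ⟨P, hP⟩ := mengerConnected_iff_hasIndependentPaths.1 hG a b hab
  rw [← card_neighborSet_eq_degree]
  have hadj i : G.Adj a (P i : G.Walk a b).snd := Walk.adj_snd (Walk.not_nil_of_ne hab)
  simpa using Fintype.card_le_of_injective (fun i => (⟨_, hadj i⟩ : G.neighborSet a))
    fun i j e => by_contra fun hij => (hP hij).snd_ne hab (congrArg Subtype.val e)

namespace joinGraph

variable {β : Type*} {B : SimpleGraph β} {h : ℕ}

@[simp] theorem adj_inl_inl {a b : β} : (joinGraph B h).Adj (.inl a) (.inl b) ↔ B.Adj a b :=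
  Iff.rfl

theorem adj_inl_inr (a : β) (i : Fin h) : (joinGraph B h).Adj (.inl a) (.inr i) := trivial

theorem adj_inr_inl (i : Fin h) (a : β) : (joinGraph B h).Adj (.inr i) (.inl a) := trivial

def inlHom : B →g joinGraph B h := ⟨Sum.inl, id⟩

theorem inlHom_injective : Injective (inlHom (B := B) (h := h)) := Sum.inl_injective

@[simp] theorem inlHom_apply (a : β) : (inlHom (B := B) (h := h) a) = .inl a := rfl

theorem hasIndependentPaths_inl_inl {k : ℕ} (hB : MengerConnected k B) {a b : β} (hab : a ≠ b) :
    (joinGraph B h).HasIndependentPaths (k + h) (.inl a) (.inl b) := by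
  obtain ⟨Q, hQ⟩ := mengerConnected_iff_hasIndependentPaths.1 hB a b hab
  let P (i : Fin h) : (joinGraph B h).Path (.inl a) (.inl b) :=
    Path.ofAdj₂ (adj_inl_inr a i) (adj_inr_inl i b) (Sum.inl_injective.ne hab)
  have hP : Pairwise (Path.Independent on P) :=
    Path.pairwise_independent_of_disjoint (by simp [P, Path.internalVertices_ofAdj₂])
      fun i j hij => by simpa [P, Path.internalVertices_ofAdj₂] using hij
  let R (i : Fin k) : (joinGraph B h).Path (.inl a) (.inl b) := (Q i).map inlHom inlHom_injective
  have hR : Pairwise (Path.Independent on R) := fun i j hij => (hQ hij).map _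
  have hRP i j : (R i).Independent (P j) :=
    (Path.independent_of_disjoint (by simp [P, Path.internalVertices_ofAdj₂])
      (by
        rw [Path.internalVertices_ofAdj₂]
        change Disjoint _ ((Q i : B.Walk a b).map inlHom).internalVertices
        rw [Walk.internalVertices_map inlHom_injective]
        simp)).symm
  simpa using hasIndependentPaths_of_pairwise
    (Pairwise.sum_elim (fun _ _ => Path.Independent.symm) hR hP hRP)

theorem hasIndependentPaths_inr_inr [Fintype β] {i j : Fin h} (hij : i ≠ j) :
    (joinGraph B h).HasIndependentPaths (Fintype.card β) (.inr i) (.inr j) :=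
  hasIndependentPaths_of_pairwise (P := fun b =>
    Path.ofAdj₂ (adj_inr_inl i b) (adj_inl_inr b j) (Sum.inr_injective.ne hij))
    (Path.pairwise_independent_of_disjoint (by simp [Path.internalVertices_ofAdj₂])
      fun b c hbc => by simpa [Path.internalVertices_ofAdj₂] using hbc)

theorem hasIndependentPaths_inl_inr_of_detours {ι : Type*} [Fintype ι] {a : β} {j : Fin h}
    (N : Finset β) (hN : ∀ c ∈ N, B.Adj a c) (σ : ι ↪ Fin h) (hσ : ∀ i, σ i ≠ j)
    (δ : ι ↪ β) (hδ : ∀ i, δ i ≠ a ∧ δ i ∉ N) :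
    (joinGraph B h).HasIndependentPaths (1 + N.card + Fintype.card ι) (.inl a) (.inr j) := by
  have huv : (Sum.inl a : β ⊕ Fin h) ≠ .inr j := Sum.inl_ne_inr
  let E (_ : Unit) : (joinGraph B h).Path (.inl a) (.inr j) := Path.singleton (adj_inl_inr a j)
  let F (c : N) : (joinGraph B h).Path (.inl a) (.inr j) :=
    Path.ofAdj₂ (adj_inl_inl.2 (hN c c.2)) (adj_inl_inr (c : β) j) huv
  let R (i : ι) : (joinGraph B h).Path (.inl a) (.inr j) :=
    Path.ofAdj₃ (adj_inl_inr a (σ i)) (adj_inr_inl (σ i) (δ i)) (adj_inl_inr (δ i) j)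
      (by simpa using (hδ i).1.symm) (by simpa using hσ i) huv
  have hF : Pairwise (Path.Independent on F) :=
    Path.pairwise_independent_of_disjoint
      (fun _ => by simp only [F, Path.internalVertices_ofAdj₂, Set.singleton_nonempty])
      fun c d hcd => by simpa [F, Path.internalVertices_ofAdj₂] using Subtype.coe_injective.ne hcd
  have hR : Pairwise (Path.Independent on R) :=
    Path.pairwise_independent_of_disjoint (by simp [R, Path.internalVertices_ofAdj₃])
      fun i i' hii' => by simp [R, Path.internalVertices_ofAdj₃, Ne.symm hii']
  have hEF u c : (E u).Independent (F c) :=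
    (Path.independent_of_disjoint (by simp [F, Path.internalVertices_ofAdj₂])
      (by simp only [E, Path.internalVertices_singleton, Set.disjoint_empty])).symm
  have hER u i : (E u).Independent (R i) :=
    (Path.independent_of_disjoint (by simp [R, Path.internalVertices_ofAdj₃])
      (by simp only [E, Path.internalVertices_singleton, Set.disjoint_empty])).symm
  have hFR c i : (F c).Independent (R i) :=
    Path.independent_of_disjoint (by simp [F, Path.internalVertices_ofAdj₂])
      (by simpa [F, R, Path.internalVertices_ofAdj₂, Path.internalVertices_ofAdj₃]
        using ne_of_mem_of_not_mem c.2 (hδ i).2)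
  have hEFR : Pairwise (Path.Independent on Sum.elim (Sum.elim E F) R) :=
    Pairwise.sum_elim (fun _ _ => Path.Independent.symm)
      (Pairwise.sum_elim (fun _ _ => Path.Independent.symm) Subsingleton.pairwise hF hEF) hR
      (by rintro (u | c) i; exacts [hER u i, hFR c i])
  simpa using hasIndependentPaths_of_pairwise hEFR

theorem hasIndependentPaths_inl_inr [Fintype β] {k : ℕ} (hB : MengerConnected k B) (a : β)
    (j : Fin h) :
    (joinGraph B h).HasIndependentPaths (min (Fintype.card β) (k + h)) (.inl a) (.inr j) := by
  classical
  let D := (B.neighborFinset a)ᶜ.erase a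
  have hD : D.card + B.degree a + 1 = Fintype.card β := by
    rw [Finset.card_erase_of_mem (by simp), Finset.card_compl, card_neighborFinset_eq_degree]
    have := B.degree_lt_card_verts a
    omega
  have hdeg : 1 < Fintype.card β → k ≤ B.degree a := fun hβ =>
    let ⟨_, hb⟩ := Fintype.exists_ne_of_one_lt_card hβ a
    hB.le_degree_s5 hb.symm
  obtain ⟨σ⟩ : Nonempty (Fin (min D.card (h - 1)) ↪ {s // s ≠ j}) :=
    Embedding.nonempty_of_card_le (by simp)
  obtain ⟨δ⟩ : Nonempty (Fin (min D.card (h - 1)) ↪ D) :=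
    Embedding.nonempty_of_card_le (by simp)
  refine (hasIndependentPaths_inl_inr_of_detours (B.neighborFinset a) (by simp)
    (σ.trans (.subtype _)) (fun i => (σ i).2) (δ.trans (.subtype _))
    (fun i => (Finset.mem_erase.1 (δ i).2).imp_right Finset.mem_compl.1)).mono ?_
  have := j.pos
  simp only [Fintype.card_fin, card_neighborFinset_eq_degree]
  omega

end joinGraph

/-- if `B` is `k'`-connected and `G` is obtained from `B` by adding `h`
new vertices each adjacent to all of `B` (and to no new vertex), then `G` is
`min(|V(B)|, k'+h)`-connected. -/
theorem joinGraph_connected {β : Type*} [Fintype β] (k' h : ℕ)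
    (B : SimpleGraph β) (hB : MengerConnected k' B) :
    MengerConnected (min (Fintype.card β) (k' + h)) (joinGraph B h) := by
  rw [mengerConnected_iff_hasIndependentPaths]
  rintro (a | i) (b | j) huv
  · exact (joinGraph.hasIndependentPaths_inl_inl hB (ne_of_apply_ne _ huv)).mono
      (min_le_right _ _)
  · exact joinGraph.hasIndependentPaths_inl_inr hB a j
  · exact (joinGraph.hasIndependentPaths_inl_inr hB b i).symm
  · exact (joinGraph.hasIndependentPaths_inr_inr (ne_of_apply_ne _ huv)).mono (min_le_left _ _)
end

section
/- Let k, h ≥ 1 and let G = ϑ_{B_k}^{B,h} be a k-molecule: G has vertex set B_k ∪ {v₁,…,v_h} where |B_k| = k, edge set B ∪ {v_i b : 1 ≤ i ≤ h, b ∈ B_k} with B ⊆ B_k × B_k a set of edges on B_k, and h ≥ k − k' where k' is the connectivity of the subgraph induced by B_k. Then the connectivity of G equals exactly k. -/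
open SimpleGraph

/-- The connectivity of a graph: the largest `m` for which it is `m`-connected.
(With this definition the connectivity of the `k`-clique is `k-1`, as in the
paper's convention.) -/
noncomputable def connectivity {V : Type*} (G : SimpleGraph V) : ℕ :=
  sSup {m | MengerConnected m G}

/-- The `k`-molecule `ϑ_{B_k}^{Bs,h}`: its vertices are a base `B_k` of `k`
vertices (the `Sum.inl` vertices) carrying the internal edge set `Bs`, together
with `h` further vertices `v₁, …, v_h` (the `Sum.inr` vertices), each adjacent
to every base vertex and to no other non-base vertex. -/
def molecule (k h : ℕ) (Bs : SimpleGraph (Fin k)) : SimpleGraph (Fin k ⊕ Fin h) where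
  Adj x y :=
    match x, y with
    | Sum.inl a, Sum.inl b => Bs.Adj a b
    | Sum.inl _, Sum.inr _ => True
    | Sum.inr _, Sum.inl _ => True
    | Sum.inr _, Sum.inr _ => False
  symm := ⟨by rintro (a | a) (b | b) hab <;> first | exact hab.symm | trivial⟩
  loopless := ⟨by rintro (a | a) hab <;> first | exact Bs.loopless.irrefl a hab | exact Bs.irrefl hab | exact hab⟩

/-!
A vertex outside the base is adjacent exactly to the `k` base vertices, and `m` internally
disjoint paths leaving a vertex start with `m` distinct neighbours of it, so the molecule is at
most `k`-connected. Conversely, `k` internally disjoint paths are built explicitly. Between two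
outer vertices take one path through each base vertex. Between two base vertices take the `k'`
paths of the base graph and `k - k' ≤ h` paths through distinct outer vertices. From a base
vertex `a` to an outer vertex `v` take one path through each base vertex `b`: the edge `av` for
`b = a`, the path `abv` for a neighbour `b` of `a`, and `awbv` for a non-neighbour `b`, with
distinct outer vertices `w ≠ v`; there are enough of these since `a` has at most
`k - 1 - k' ≤ h - 1` non-neighbours, the minimum degree being at least the connectivity.
-/

namespace SimpleGraph

variable {V V' ι κ : Type*} {G : SimpleGraph V} {G' : SimpleGraph V'} {u v w : V}

def IsMengerFamily (P : ι → G.Path u v) : Prop :=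
  Function.Injective P ∧
    ∀ i j, i ≠ j → ∀ x, x ∈ (P i).1.support → x ∈ (P j).1.support → x = u ∨ x = v

theorem mengerConnected_iff {m : ℕ} :
    MengerConnected m G ↔ ∀ u v, u ≠ v → ∃ P : Fin m → G.Path u v, IsMengerFamily P :=
  Iff.rfl

namespace IsMengerFamily

variable {P : ι → G.Path u v}

theorem comp (hP : IsMengerFamily P) {f : κ → ι} (hf : f.Injective) :
    IsMengerFamily (P ∘ f) :=
  ⟨hP.1.comp hf, fun _ _ hij => hP.2 _ _ (hf.ne hij)⟩

theorem exists_fin [Fintype ι] (hP : IsMengerFamily P) {m : ℕ} (hm : m ≤ Fintype.card ι) :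
    ∃ Q : Fin m → G.Path u v, IsMengerFamily Q :=
  ⟨_, hP.comp ((Fintype.equivFin ι).symm.injective.comp (Fin.castLE_injective hm))⟩

theorem reverse (hP : IsMengerFamily P) : IsMengerFamily fun i => (P i).reverse := by
  refine ⟨fun i j hij => hP.1 ?_, fun i j hij x hxi hxj => ?_⟩
  · exact Subtype.ext (Walk.reverse_injective (congrArg Subtype.val hij))
  · simp only [Path.reverse_coe, Walk.support_reverse, List.mem_reverse] at hxi hxj
    exact (hP.2 i j hij x hxi hxj).symm

theorem mapEmbedding (hP : IsMengerFamily P) (f : G ↪g G') :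
    IsMengerFamily fun i => (P i).mapEmbedding f := by
  refine ⟨(Path.mapEmbedding_injective f u v).comp hP.1, fun i j hij x hxi hxj => ?_⟩
  simp only [Path.mapEmbedding_coe, Walk.support_map, List.mem_map] at hxi hxj
  obtain ⟨y, hyi, rfl⟩ := hxi
  obtain ⟨z, hzj, hzy⟩ := hxj
  obtain rfl := f.injective hzy
  exact (hP.2 i j hij z hyi hzj).imp (congrArg f) (congrArg f)

theorem sumElim (hP : IsMengerFamily P) {Q : κ → G.Path u v} (hQ : IsMengerFamily Q)
    (hne : ∀ i j, P i ≠ Q j)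
    (hcross : ∀ i j x, x ∈ (P i).1.support → x ∈ (Q j).1.support → x = u ∨ x = v) :
    IsMengerFamily (Sum.elim P Q) := by
  refine ⟨hP.1.sumElim hQ.1 hne, ?_⟩
  rintro (i | i) (j | j) hij x hxi hxj
  · exact hP.2 i j (fun h => hij (congrArg _ h)) x hxi hxj
  · exact hcross i j x hxi hxj
  · exact hcross j i x hxj hxi
  · exact hQ.2 i j (fun h => hij (congrArg _ h)) x hxi hxj

theorem injective_snd (hP : IsMengerFamily P) (huv : u ≠ v) :
    Function.Injective fun i => (P i).1.snd := by
  intro i j (hij : (P i).1.snd = (P j).1.snd)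
  by_contra hne
  have hnil : ∀ l, ¬(P l).1.Nil := fun l => Walk.not_nil_of_ne huv
  have hmem : ∀ l, (P l).1.snd ∈ (P l).1.support := fun l =>
    List.mem_of_mem_tail (Walk.snd_mem_tail_support (hnil l))
  rcases hP.2 i j hne _ (hmem i) (hij ▸ hmem j) with hu | hv
  · exact (Walk.adj_snd (hnil i)).ne hu.symm
  · have hedge : ∀ l, (P l).1.snd = v → ∃ h : G.Adj u v, (P l).1 = h.toWalk := fun l hl => by
      have he := Walk.mk_start_snd_mem_edges (hnil l)
      rw [hl] at he
      exact ⟨_, (P l).2.eq_adj_toWalk_of_mem_edges he⟩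
    obtain ⟨_, hi⟩ := hedge i hv
    obtain ⟨_, hj⟩ := hedge j (hij.symm.trans hv)
    exact hne (hP.1 (Subtype.ext (hi.trans hj.symm)))

end IsMengerFamily

def Path.twoStep (h₁ : G.Adj u w) (h₂ : G.Adj w v) (huv : u ≠ v) : G.Path u v :=
  ⟨Walk.cons h₁ h₂.toWalk, .mk' (by simp [h₁.ne, h₂.ne, huv])⟩

@[simp]
theorem Path.support_twoStep (h₁ : G.Adj u w) (h₂ : G.Adj w v) (huv : u ≠ v) :
    (Path.twoStep h₁ h₂ huv).1.support = [u, w, v] :=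
  rfl

theorem isMengerFamily_twoStep {w : ι → V} (hw : w.Injective) (hu : ∀ i, G.Adj u (w i))
    (hv : ∀ i, G.Adj (w i) v) (huv : u ≠ v) :
    IsMengerFamily fun i => Path.twoStep (hu i) (hv i) huv := by
  refine ⟨fun i j hij => hw ?_, fun i j hij x hxi hxj => ?_⟩
  · simpa using congrArg (fun p : G.Path u v => p.1.support) hij
  · simp only [Path.support_twoStep, List.mem_cons, List.not_mem_nil, or_false] at hxi hxj
    rcases hxi with rfl | rfl | rfl
    · exact .inl rfl
    · rcases hxj with h | h | h
      · exact .inl h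
      · exact absurd (hw h) hij
      · exact .inr h
    · exact .inr rfl

theorem mengerConnected_zero : MengerConnected 0 G :=
  fun _ _ _ => ⟨Fin.elim0, fun i => i.elim0, fun i => i.elim0⟩

theorem MengerConnected.le_card_neighborSet {m : ℕ} (hm : MengerConnected m G) (huv : u ≠ v)
    [Finite (G.neighborSet u)] : m ≤ Nat.card (G.neighborSet u) := by
  obtain ⟨P, hP⟩ := mengerConnected_iff.1 hm u v huv
  have hadj : ∀ i, G.Adj u (P i).1.snd := fun i => Walk.adj_snd (Walk.not_nil_of_ne huv)
  simpa only [Nat.card_eq_fintype_card, Fintype.card_fin] using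
    Nat.card_le_card_of_injective (fun i => (⟨_, hadj i⟩ : G.neighborSet u))
      fun i j hij => hP.injective_snd huv (congrArg Subtype.val hij)

theorem mengerConnected_connectivity [Finite V] [Nontrivial V] :
    MengerConnected (connectivity G) G := by
  obtain ⟨u, v, huv⟩ := exists_pair_ne V
  refine Nat.sSup_mem (s := {m | MengerConnected m G}) ⟨0, mengerConnected_zero⟩
    ⟨Nat.card V, fun m hm => ?_⟩
  exact (hm.le_card_neighborSet huv).trans (Finite.card_subtype_le _)

theorem connectivity_le_degree [Fintype V] [Nontrivial V] [DecidableRel G.Adj] (u : V) :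
    connectivity G ≤ G.degree u := by
  obtain ⟨v, huv⟩ := exists_ne u
  simpa only [Nat.card_eq_fintype_card, card_neighborSet_eq_degree] using
    (mengerConnected_connectivity (G := G)).le_card_neighborSet huv.symm

theorem connectivity_lt_card [Fintype V] [Nontrivial V] : connectivity G < Fintype.card V := by
  classical
  obtain ⟨u⟩ := (inferInstance : Nonempty V)
  exact (connectivity_le_degree u).trans_lt (G.degree_lt_card_verts u)

end SimpleGraph

section Molecule

variable {k h : ℕ} {Bs : SimpleGraph (Fin k)}

@[simp]
theorem molecule_adj_inl_inl {a b : Fin k} :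
    (molecule k h Bs).Adj (.inl a) (.inl b) ↔ Bs.Adj a b :=
  Iff.rfl

theorem molecule_adj_inl_inr (a : Fin k) (i : Fin h) : (molecule k h Bs).Adj (.inl a) (.inr i) :=
  trivial

theorem molecule_adj_inr_inl (i : Fin h) (a : Fin k) : (molecule k h Bs).Adj (.inr i) (.inl a) :=
  trivial

theorem neighborSet_molecule_inr (i : Fin h) :
    (molecule k h Bs).neighborSet (.inr i) = Set.range Sum.inl := by
  ext (a | j)
  · exact iff_of_true (molecule_adj_inr_inl (Bs := Bs) i a) ⟨a, rfl⟩
  · exact iff_of_false id (by simp)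

def moleculeInl (h : ℕ) (Bs : SimpleGraph (Fin k)) : Bs ↪g molecule k h Bs :=
  ⟨Function.Embedding.inl, Iff.rfl⟩

@[simp]
theorem moleculeInl_apply (a : Fin k) : moleculeInl h Bs a = .inl a :=
  rfl

theorem le_of_mengerConnected_molecule {m : ℕ} (hm : MengerConnected m (molecule k h Bs))
    (hk : 1 ≤ k) (hh : 1 ≤ h) : m ≤ k := by
  have := hm.le_card_neighborSet (u := .inr ⟨0, hh⟩) (v := .inl ⟨0, hk⟩) Sum.inr_ne_inl
  rwa [neighborSet_molecule_inr, Nat.card_range_of_injective Sum.inl_injective,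
    Nat.card_eq_fintype_card, Fintype.card_fin] at this

theorem exists_isMengerFamily_molecule_inr_inr {i j : Fin h} (hij : i ≠ j) :
    ∃ P : Fin k → (molecule k h Bs).Path (.inr i) (.inr j), IsMengerFamily P :=
  ⟨_, isMengerFamily_twoStep Sum.inl_injective (molecule_adj_inr_inl i)
    (fun a => molecule_adj_inl_inr a j) (Sum.inr_injective.ne hij)⟩

theorem exists_isMengerFamily_molecule_inl_inl {c : ℕ} (hc : MengerConnected c Bs)
    (hck : c ≤ k) (hkh : k - c ≤ h) {a b : Fin k} (hab : a ≠ b) :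
    ∃ P : Fin k → (molecule k h Bs).Path (.inl a) (.inl b), IsMengerFamily P := by
  obtain ⟨Q, hQ⟩ := mengerConnected_iff.1 hc a b hab
  have hR := isMengerFamily_twoStep (Sum.inr_injective.comp (Fin.castLE_injective hkh))
    (fun l => molecule_adj_inl_inr (Bs := Bs) a (Fin.castLE hkh l))
    (fun l => molecule_adj_inr_inl _ b) (Sum.inl_injective.ne hab)
  have hbase :
      ∀ l x, x ∈ ((Q l).mapEmbedding (moleculeInl h Bs)).1.support → ∃ y, x = .inl y := by
    intro l x hx
    simp only [Path.mapEmbedding_coe, Walk.support_map, List.mem_map] at hx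
    obtain ⟨y, -, rfl⟩ := hx
    exact ⟨y, rfl⟩
  refine ((hQ.mapEmbedding (moleculeInl h Bs)).sumElim hR ?_ ?_).exists_fin (by simp; omega)
  · intro l l' heq
    obtain ⟨y, hy⟩ := hbase l (.inr (Fin.castLE hkh l')) (heq ▸ by simp)
    exact Sum.inr_ne_inl hy
  · intro l l' x hx hx'
    obtain ⟨y, rfl⟩ := hbase l x hx
    simpa using hx'

section PathThrough

variable {a : Fin k} {i : Fin h}

open Classical in
noncomputable def moleculePathThrough (σ : Bsᶜ.neighborSet a ↪ {j : Fin h // j ≠ i})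
    (b : Fin k) : (molecule k h Bs).Path (.inl a) (.inr i) :=
  if hba : b = a then Path.singleton (molecule_adj_inl_inr a i)
  else if hab : Bs.Adj a b then
    Path.twoStep (molecule_adj_inl_inl.2 hab) (molecule_adj_inl_inr b i) Sum.inl_ne_inr
  else
    let j := σ ⟨b, (compl_adj Bs a b).2 ⟨Ne.symm hba, hab⟩⟩
    ⟨.cons (molecule_adj_inl_inr a j.1) (.cons (molecule_adj_inr_inl j.1 b)
      (molecule_adj_inl_inr b i).toWalk), .mk' (by simp [Ne.symm hba, j.2])⟩

variable (σ : Bsᶜ.neighborSet a ↪ {j : Fin h // j ≠ i})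

theorem inl_mem_support_moleculePathThrough {b c : Fin k} :
    .inl c ∈ (moleculePathThrough σ b).1.support ↔ c = a ∨ c = b := by
  unfold moleculePathThrough
  split_ifs with hba hab
  · subst hba; simp [Path.singleton]
  · simp
  · simp

theorem eq_of_inr_mem_support_moleculePathThrough {b : Fin k} {j : Fin h}
    (hj : .inr j ∈ (moleculePathThrough σ b).1.support) :
    j = i ∨ ∃ hb : Bsᶜ.Adj a b, j = σ ⟨b, hb⟩ := by
  unfold moleculePathThrough at hj
  split_ifs at hj with hba hab
  · simp_all [Path.singleton]
  · simp_all
  · simp only [Walk.support_cons, Walk.support_nil, List.mem_cons, List.not_mem_nil,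
      Sum.inr.injEq, reduceCtorEq, false_or, or_false] at hj
    rcases hj with hj | hj
    · exact .inr ⟨_, hj⟩
    · exact .inl hj

theorem isMengerFamily_moleculePathThrough : IsMengerFamily (moleculePathThrough σ) := by
  refine ⟨fun b b' hbb' => ?_, fun b b' hbb' x hxb hxb' => ?_⟩
  · have hb := (inl_mem_support_moleculePathThrough σ (c := b)).2 (.inr rfl)
    have hb' := (inl_mem_support_moleculePathThrough σ (c := b')).2 (.inr rfl)
    rw [hbb'] at hb
    rw [← hbb'] at hb'
    rw [inl_mem_support_moleculePathThrough] at hb hb'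
    omega
  · rcases x with c | j
    · rw [inl_mem_support_moleculePathThrough] at hxb hxb'
      exact .inl (congrArg Sum.inl (by omega))
    · rcases eq_of_inr_mem_support_moleculePathThrough σ hxb with rfl | ⟨hb, rfl⟩
      · exact .inr rfl
      · rcases eq_of_inr_mem_support_moleculePathThrough σ hxb' with hj | ⟨hb', hj⟩
        · exact .inr (congrArg _ hj)
        · exact absurd (congrArg Subtype.val (σ.injective (Subtype.ext hj))) hbb'

end PathThrough

theorem exists_isMengerFamily_molecule_inl_inr [DecidableRel Bs.Adj] {a : Fin k}
    (hdeg : k ≤ Bs.degree a + h) (i : Fin h) :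
    ∃ P : Fin k → (molecule k h Bs).Path (.inl a) (.inr i), IsMengerFamily P := by
  have hσ : Nonempty (Bsᶜ.neighborSet a ↪ {j : Fin h // j ≠ i}) := by
    apply Function.Embedding.nonempty_of_card_le
    have := Bs.degree_lt_card_verts a
    simp only [card_neighborSet_eq_degree, degree_compl, ne_eq, Fintype.card_subtype_compl,
      Fintype.card_fin, Fintype.card_unique] at this ⊢
    omega
  obtain ⟨σ⟩ := hσ
  exact ⟨_, isMengerFamily_moleculePathThrough σ⟩

theorem le_degree_add_of_connectivity [DecidableRel Bs.Adj] (hh : 1 ≤ h)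
    (hcond : k - connectivity Bs ≤ h) (a : Fin k) : k ≤ Bs.degree a + h := by
  rcases subsingleton_or_nontrivial (Fin k) with hk | hk
  · have := Fintype.card_le_one_iff_subsingleton.2 hk
    rw [Fintype.card_fin] at this
    omega
  · have := connectivity_le_degree (G := Bs) a
    omega

end Molecule

/-- for `k, h ≥ 1`, the `k`-molecule `ϑ_{B_k}^{Bs,h}` (which requires
`h ≥ k - k'` where `k'` is the connectivity of the base graph) has connectivity
exactly `k`. -/
theorem molecule_connectivity (k h : ℕ) (hk : 1 ≤ k) (hh : 1 ≤ h)
    (Bs : SimpleGraph (Fin k)) (hcond : k - connectivity Bs ≤ h) :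
    connectivity (molecule k h Bs) = k := by
  classical
  refine IsGreatest.csSup_eq ⟨?_, fun m hm => le_of_mengerConnected_molecule hm hk hh⟩
  rintro (a | i) (b | j) hne
  · have hab : a ≠ b := fun hab => hne (congrArg _ hab)
    have : Nontrivial (Fin k) := ⟨a, b, hab⟩
    have hck : connectivity Bs ≤ k := (connectivity_lt_card.trans_eq (Fintype.card_fin k)).le
    exact exists_isMengerFamily_molecule_inl_inl mengerConnected_connectivity hck hcond hab
  · exact exists_isMengerFamily_molecule_inl_inr (le_degree_add_of_connectivity hh hcond a) j
  · obtain ⟨P, hP⟩ :=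
      exists_isMengerFamily_molecule_inl_inr (le_degree_add_of_connectivity hh hcond b) i
    exact ⟨_, hP.reverse⟩
  · exact exists_isMengerFamily_molecule_inr_inr fun hij => hne (congrArg _ hij)
end
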